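/- arXiv:1510.00769 — 12 statements merged into one kernel-verified Lean document; each statement's English description precedes it below -/
import Mathlib

section
/- Let f be a complex polynomial of degree n ≥ 4 and let p be a complex polynomial. If β is a root of f of multiplicity exactly 2, then (x - β)² divides f''(x)p(x) - f'(x)p'(x) if and only if (x - β) divides p(x). -/
open Polynomial

theorem stmt0 (f p : Polynomial ℂ) (hn : 4 ≤ f.natDegree) (β : ℂ)
    (h2 : (X - C β) ^ 2 ∣ f) (h3 : ¬ (X - C β) ^ 3 ∣ f) :
    (X - C β) ^ 2 ∣ (derivative (derivative f) * p - derivative f * derivative p) ↔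
      (X - C β) ∣ p := by
  obtain ⟨g, hf⟩ := h2
  have hg : g.eval β ≠ 0 := by
    intro h
    apply h3
    obtain ⟨q, hq⟩ := dvd_iff_isRoot.mpr h
    exact ⟨q, by rw [hf, hq]; ring⟩
  have hf' : derivative f = (X - C β) * (2 * g + (X - C β) * derivative g) := by
    rw [hf]
    simp [derivative_pow, derivative_mul, derivative_X_sub_C]
    simp only [map_ofNat C 2]
    ring
  have hf'' : derivative (derivative f) =
      2 * g + 4 * (X - C β) * derivative g + (X - C β) ^ 2 * derivative (derivative g) := by
    rw [hf']
    simp [derivative_mul, derivative_X_sub_C]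
    ring
  constructor
  · intro hR
    have h1 : (X - C β) ∣
        (derivative (derivative f) * p - derivative f * derivative p) :=
      dvd_trans (dvd_pow_self _ two_ne_zero) hR
    have h0 := dvd_iff_isRoot.mp h1
    rw [dvd_iff_isRoot]
    have e1 : eval β (derivative f) = 0 := by rw [hf']; simp
    have e2 : eval β (derivative (derivative f)) = 2 * g.eval β := by rw [hf'']; simp
    simp only [IsRoot, eval_sub, eval_mul, e1, e2, zero_mul, sub_zero] at h0
    have h2 : (2 : ℂ) * g.eval β * p.eval β = 0 := h0
    rcases mul_eq_zero.mp h2 with h | h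
    · rcases mul_eq_zero.mp h with h' | h'
      · norm_num at h'
      · exact absurd h' hg
    · exact h
  · rintro ⟨q, hp⟩
    refine ⟨3 * derivative g * q + (X - C β) * derivative (derivative g) * q
      - 2 * g * derivative q - (X - C β) * derivative g * derivative q, ?_⟩
    rw [hf'', hf', hp, derivative_mul, derivative_X_sub_C]
    ring
end

section
/- Let f be a complex polynomial and p a complex polynomial. If γ is a root of f of multiplicity m ≥ 3, then (x - γ)^m divides f''(x)p(x) - f'(x)p'(x) if and only if (x - γ)² divides p(x). -/
open Polynomial

theorem stmt1 (f p g : Polynomial ℂ) (γ : ℂ) (m : ℕ) (hm : 3 ≤ m)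
    (hf : f = (X - C γ) ^ m * g) (hg : g.eval γ ≠ 0) :
    (X - C γ) ^ m ∣ (derivative (derivative f) * p - derivative f * derivative p) ↔
      (X - C γ) ^ 2 ∣ p := by
  obtain ⟨n, rfl⟩ : ∃ n, m = n + 3 := ⟨m - 3, by omega⟩
  set a : Polynomial ℂ := X - C γ with ha
  have ha' : derivative a = 1 := by simp [ha]
  set k : Polynomial ℂ := C ((n : ℂ) + 3) * g + a * derivative g with hk
  have hf1 : derivative f = a ^ (n + 2) * k := by
    rw [hf, derivative_mul, derivative_pow, ha', hk]
    push_cast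
    ring
  set h : Polynomial ℂ := C ((n : ℂ) + 2) * k + a * derivative k with hh
  have hf2 : derivative (derivative f) = a ^ (n + 1) * h := by
    rw [hf1, derivative_mul, derivative_pow, ha', hh]
    push_cast
    ring
  have hR : derivative (derivative f) * p - derivative f * derivative p
      = a ^ (n + 1) * (h * p - a * k * derivative p) := by
    rw [hf2, hf1]; ring
  have hane : a ≠ 0 := X_sub_C_ne_zero γ
  rw [hR, show n + 3 = (n + 1) + 2 by ring, pow_add,
    mul_dvd_mul_iff_left (pow_ne_zero _ hane)]
  have h2 : ((n : ℂ) + 2) ≠ 0 := by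
    have : ((n + 2 : ℕ) : ℂ) ≠ 0 := Nat.cast_ne_zero.mpr (by omega)
    push_cast at this; exact this
  have h3 : ((n : ℂ) + 3) ≠ 0 := by
    have : ((n + 3 : ℕ) : ℂ) ≠ 0 := Nat.cast_ne_zero.mpr (by omega)
    push_cast at this; exact this
  have h1 : ((n : ℂ) + 1) ≠ 0 := by
    have : ((n + 1 : ℕ) : ℂ) ≠ 0 := Nat.cast_ne_zero.mpr (by omega)
    push_cast at this; exact this
  have hka : k.eval γ = ((n : ℂ) + 3) * g.eval γ := by simp [hk, ha]
  have hha : h.eval γ = ((n : ℂ) + 2) * k.eval γ := by simp [hh, ha]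
  constructor
  · intro hd
    -- first show a ∣ p
    have hdvd1 : a ∣ h * p := by
      have hE : a ∣ h * p - a * k * derivative p :=
        dvd_trans (dvd_pow_self a two_ne_zero) hd
      have hE2 : a ∣ a * k * derivative p := ⟨k * derivative p, by ring⟩
      have := dvd_add hE hE2
      simpa using this
    have hprime : Prime a := prime_X_sub_C γ
    have hnh : ¬ a ∣ h := by
      rw [ha, dvd_iff_isRoot]
      simp only [IsRoot, hha, hka]
      exact fun hc => (mul_ne_zero h2 (mul_ne_zero h3 hg)) (by linear_combination hc)
    have hap : a ∣ p := ((hprime.dvd_mul.mp hdvd1).resolve_left hnh)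
    obtain ⟨q, rfl⟩ := hap
    have hdp : derivative (a * q) = q + a * derivative q := by
      rw [derivative_mul, ha']; ring
    have hF : h * (a * q) - a * k * derivative (a * q)
        = a * (h * q - k * q - a * (k * derivative q)) := by
      rw [hdp]; ring
    rw [hF, pow_two, mul_dvd_mul_iff_left hane] at hd
    have hq0 : q.eval γ = 0 := by
      have hroot : IsRoot (h * q - k * q - a * (k * derivative q)) γ :=
        dvd_iff_isRoot.mp hd
      simp only [IsRoot, eval_sub, eval_mul, hha, hka, ha, eval_add, eval_X, eval_C,
        sub_self, zero_mul, sub_zero] at hroot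
      have hcoef : ((n : ℂ) + 1) * (((n : ℂ) + 3) * g.eval γ) * q.eval γ = 0 := by
        linear_combination hroot
      rcases mul_eq_zero.mp hcoef with hc | hc
      · exact absurd hc (mul_ne_zero h1 (mul_ne_zero h3 hg))
      · exact hc
    obtain ⟨r, hr⟩ := dvd_iff_isRoot.mpr hq0
    exact ⟨r, by rw [pow_two, hr, ha]; ring⟩
  · rintro ⟨q, rfl⟩
    have hdp : derivative (a ^ 2 * q) = C 2 * a * q + a ^ 2 * derivative q := by
      rw [derivative_mul, derivative_pow, ha']
      push_cast; ring
    exact ⟨h * q - k * (C 2 * q + a * derivative q), by rw [hdp]; ring⟩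
end

section
/- Let f be a complex polynomial of degree n ≥ 4 with no simple roots (every root has multiplicity at least 2). Let f₂ be the product of (x - β) over distinct roots β of multiplicity exactly 2, and f₃ the product of (x - γ) over distinct roots γ of multiplicity at least 3. Then a polynomial p of degree at most n-2 satisfies f ∣ (f''p - f'p') if and only if f₂·f₃² divides p. -/
/-!
Everything is local at a root `a` of multiplicity `m ≥ 2`. Writing `f = (X - a)^m g` with
`g(a) ≠ 0`, one gets `f' = (X - a)^(m-1) B` and `f'' = (X - a)^(m-2) A` with `B(a) = m g(a)` and
`A(a) = (m - 1) B(a)`, so `f'' p - f' p' = (X - a)^(m-2) h` with `h = A p - (X - a) B p'`.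
Now `(X - a)^2 ∣ h` means `h(a) = h'(a) = 0`, i.e. `p(a) = 0` and `(m - 2) B(a) p'(a) = 0`:
a simple root of `p` at `a` suffices when `m = 2`, a double one is needed when `m ≥ 3`.
Since the factors `X - a` are pairwise coprime, these local conditions assemble into `f₂ f₃² ∣ p`.
-/

open Polynomial

namespace Polynomial

section CommRing

variable {R : Type*} [CommRing R]

theorem sq_X_sub_C_dvd_iff {h : R[X]} {a : R} :
    (X - C a) ^ 2 ∣ h ↔ h.IsRoot a ∧ (derivative h).IsRoot a := by
  rcases eq_or_ne h 0 with rfl | h0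
  · simp
  rw [← le_rootMultiplicity_iff h0, ← one_lt_rootMultiplicity_iff_isRoot h0]
  rfl

theorem exists_derivative_X_sub_C_pow_succ_mul (a : R) (n : ℕ) (g : R[X]) :
    ∃ g₁ : R[X], derivative ((X - C a) ^ (n + 1) * g) = (X - C a) ^ n * g₁ ∧
      g₁.eval a = (n + 1) * g.eval a := by
  refine ⟨C ((n : R) + 1) * g + (X - C a) * derivative g, ?_, by simp⟩
  rw [derivative_mul, derivative_X_sub_C_pow]
  push_cast
  ring

theorem sq_X_sub_C_dvd_mul_sub_iff [IsDomain R] {A B p : R[X]} {a : R} (hA : A.eval a ≠ 0) :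
    (X - C a) ^ 2 ∣ A * p - (X - C a) * (B * derivative p) ↔
      p.IsRoot a ∧ ((A - B).eval a = 0 ∨ (derivative p).IsRoot a) := by
  simp only [sq_X_sub_C_dvd_iff, IsRoot, derivative_sub, derivative_mul, derivative_X,
    derivative_C, eval_sub, eval_mul, eval_add, eval_one, eval_X, eval_C, sub_self,
    zero_mul, add_zero, sub_zero, mul_eq_zero, hA, false_or]
  refine and_congr_right fun hp => ?_
  rw [hp, ← mul_eq_zero]
  ring_nf

theorem X_sub_C_pow_rootMultiplicity_dvd_derivative_mul_sub_iff [IsDomain R] [CharZero R]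
    {f : R[X]} {a : R} (hf : f ≠ 0) (h2 : 2 ≤ f.rootMultiplicity a) (p : R[X]) :
    (X - C a) ^ f.rootMultiplicity a ∣ derivative (derivative f) * p - derivative f * derivative p ↔
      (X - C a) ^ min (f.rootMultiplicity a - 1) 2 ∣ p := by
  obtain ⟨k, hk⟩ : ∃ k, f.rootMultiplicity a = k + 2 := ⟨_, (Nat.sub_add_cancel h2).symm⟩
  obtain ⟨g, hfg, hga⟩ : ∃ g, f = (X - C a) ^ (k + 2) * g ∧ g.eval a ≠ 0 :=
    ⟨_, by rw [← hk, pow_mul_divByMonic_rootMultiplicity_eq],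
      eval_divByMonic_pow_rootMultiplicity_ne_zero a hf⟩
  obtain ⟨B, hf', hBa⟩ := exists_derivative_X_sub_C_pow_succ_mul a (k + 1) g
  obtain ⟨A, hf'', hAa⟩ := exists_derivative_X_sub_C_pow_succ_mul a k B
  rw [← hfg] at hf'
  rw [← hf'] at hf''
  have hB : B.eval a ≠ 0 := by rw [hBa]; exact mul_ne_zero (by norm_cast) hga
  have hA : A.eval a ≠ 0 := by rw [hAa]; exact mul_ne_zero (by norm_cast) hB
  have hAB : (A - B).eval a = k * B.eval a := by rw [eval_sub, hAa]; ring
  have hq : derivative (derivative f) * p - derivative f * derivative p =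
      (X - C a) ^ k * (A * p - (X - C a) * (B * derivative p)) := by
    rw [hf'', hf']; ring
  rw [hk, hq, pow_add, mul_dvd_mul_iff_left (pow_ne_zero _ (X_sub_C_ne_zero a)),
    sq_X_sub_C_dvd_mul_sub_iff hA, hAB]
  rcases k with _ | k
  · simp [dvd_iff_isRoot]
  · simp [hB, sq_X_sub_C_dvd_iff, Nat.cast_add_one_ne_zero]

end CommRing

theorem prod_X_sub_C_pow_dvd_iff {K : Type*} [Field K] {s : Finset K} {e : K → ℕ} {q : K[X]} :
    (∏ b ∈ s, (X - C b) ^ e b) ∣ q ↔ ∀ b ∈ s, (X - C b) ^ e b ∣ q := by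
  refine ⟨fun h b hb => (Finset.dvd_prod_of_mem (fun b => (X - C b) ^ e b) hb).trans h,
    Finset.prod_dvd_of_coprime fun a _ b _ hab => ?_⟩
  exact (pairwise_coprime_X_sub_C Function.injective_id hab).pow

theorem Splits.dvd_iff_forall_X_sub_C_pow_dvd {K : Type*} [Field K] [DecidableEq K] {f q : K[X]}
    (hf : f.Splits) (hf0 : f ≠ 0) :
    f ∣ q ↔ ∀ a ∈ f.roots.toFinset, (X - C a) ^ f.rootMultiplicity a ∣ q := by
  conv_lhs => rw [hf.eq_prod_roots]
  rw [C_mul_dvd (leadingCoeff_ne_zero.mpr hf0), prod_multiset_root_eq_finset_root,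
    prod_X_sub_C_pow_dvd_iff]

end Polynomial

theorem Finset.prod_filter_eq_two_mul_sq_prod_filter_three_le {α M : Type*} [CommMonoid M]
    (s : Finset α) (m : α → ℕ) (φ : α → M) (hm : ∀ b ∈ s, 2 ≤ m b) :
    (∏ b ∈ s.filter (m · = 2), φ b) * (∏ b ∈ s.filter (3 ≤ m ·), φ b) ^ 2 =
      ∏ b ∈ s, φ b ^ min (m b - 1) 2 := by
  have hfilter : s.filter (¬ m · = 2) = s.filter (3 ≤ m ·) :=
    Finset.filter_congr fun b hb => by have := hm b hb; omega
  rw [← Finset.prod_filter_mul_prod_filter_not s (m · = 2), hfilter, ← Finset.prod_pow]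
  congr 1 <;> refine Finset.prod_congr rfl fun b hb => ?_
  · simp [(Finset.mem_filter.mp hb).2]
  · rw [min_eq_right (by have := (Finset.mem_filter.mp hb).2; omega)]

theorem stmt3_general (f : Polynomial ℂ) (hn : 4 ≤ f.natDegree)
    (hmult : ∀ β : ℂ, f.IsRoot β → 2 ≤ f.rootMultiplicity β)
    (f₂ f₃ : Polynomial ℂ)
    (hf₂ : f₂ = ∏ β ∈ f.roots.toFinset.filter (fun β => f.rootMultiplicity β = 2), (X - C β))
    (hf₃ : f₃ = ∏ β ∈ f.roots.toFinset.filter (fun β => 3 ≤ f.rootMultiplicity β), (X - C β))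
    (p : Polynomial ℂ) :
    f ∣ (derivative (derivative f) * p - derivative f * derivative p) ↔ f₂ * f₃ ^ 2 ∣ p := by
  have hf : f ≠ 0 := by rintro rfl; simp at hn
  have hroots : ∀ β ∈ f.roots.toFinset, 2 ≤ f.rootMultiplicity β := fun β hβ =>
    hmult β (isRoot_of_mem_roots (Multiset.mem_toFinset.mp hβ))
  rw [hf₂, hf₃, Finset.prod_filter_eq_two_mul_sq_prod_filter_three_le _ _ _ hroots,
    (IsAlgClosed.splits f).dvd_iff_forall_X_sub_C_pow_dvd hf, prod_X_sub_C_pow_dvd_iff]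
  exact forall₂_congr fun β hβ =>
    X_sub_C_pow_rootMultiplicity_dvd_derivative_mul_sub_iff hf (hroots β hβ) p

theorem stmt3 (f : Polynomial ℂ) (hn : 4 ≤ f.natDegree)
    (hmult : ∀ β : ℂ, f.IsRoot β → 2 ≤ f.rootMultiplicity β)
    (f₂ f₃ : Polynomial ℂ)
    (hf₂ : f₂ = ∏ β ∈ f.roots.toFinset.filter (fun β => f.rootMultiplicity β = 2), (X - C β))
    (hf₃ : f₃ = ∏ β ∈ f.roots.toFinset.filter (fun β => 3 ≤ f.rootMultiplicity β), (X - C β))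
    (p : Polynomial ℂ) (hp : p.degree ≤ (f.natDegree - 2 : ℕ)) :
    f ∣ (derivative (derivative f) * p - derivative f * derivative p) ↔ f₂ * f₃ ^ 2 ∣ p :=
  stmt3_general f hn hmult f₂ f₃ hf₂ hf₃ p
end

section
/- Let f be a complex polynomial of degree n ≥ 4 such that q(x)² divides f(x) for some quadratic polynomial q ∈ ℂ[x]. Then there exists a nonzero polynomial p of degree at most n-2 such that f divides f''p - f'p'. -/
open Polynomial

/-- Auxiliary dimension-count lemma: for nonzero `g` and any `A B`, there is a nonzero `w`
of degree at most `g.natDegree` with `g ∣ A * w - B * w'`. -/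
lemma stmt5_aux (g A B : Polynomial ℂ) (hg : g ≠ 0) :
    ∃ w : Polynomial ℂ, w ≠ 0 ∧ w.degree < ((g.natDegree + 1 : ℕ) : WithBot ℕ) ∧
      g ∣ (A * w - B * derivative w) := by
  set m := g.natDegree with hm
  set gm : Polynomial ℂ := g * C g.leadingCoeff⁻¹ with hgm
  have hmonic : gm.Monic := monic_mul_leadingCoeff_inv hg
  have hdeg_gm : gm.degree = g.degree := degree_mul_leadingCoeff_inv g hg
  have hdeg_g : g.degree = (m : WithBot ℕ) := degree_eq_natDegree hg
  -- the linear map w ↦ (A*w - B*w') %ₘ gm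
  let T : Polynomial ℂ →ₗ[ℂ] Polynomial ℂ :=
    (Polynomial.modByMonicHom gm).comp
      ((LinearMap.mulLeft ℂ A) - (LinearMap.mulLeft ℂ B).comp
        (Polynomial.derivative : Polynomial ℂ →ₗ[ℂ] Polynomial ℂ))
  have hT : ∀ w : Polynomial ℂ, T w = (A * w - B * derivative w) %ₘ gm := by
    intro w; rfl
  have hmem : ∀ x : degreeLT ℂ (m + 1), T x.1 ∈ degreeLT ℂ m := by
    intro x
    rw [mem_degreeLT, hT]
    calc ((A * x.1 - B * derivative x.1) %ₘ gm).degree < gm.degree :=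
          degree_modByMonic_lt _ hmonic
      _ = (m : WithBot ℕ) := by rw [hdeg_gm, hdeg_g]
  let L : degreeLT ℂ (m + 1) →ₗ[ℂ] degreeLT ℂ m :=
    LinearMap.codRestrict _ (T.comp (Submodule.subtype _)) hmem
  haveI : Module.Finite ℂ (degreeLT ℂ (m + 1)) :=
    Module.Finite.equiv (Polynomial.degreeLTEquiv ℂ (m + 1)).symm
  haveI : Module.Finite ℂ (degreeLT ℂ m) :=
    Module.Finite.equiv (Polynomial.degreeLTEquiv ℂ m).symm
  have hfr1 : Module.finrank ℂ (degreeLT ℂ (m + 1)) = m + 1 := by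
    rw [(Polynomial.degreeLTEquiv ℂ (m + 1)).finrank_eq, Module.finrank_fin_fun]
  have hfr2 : Module.finrank ℂ (degreeLT ℂ m) = m := by
    rw [(Polynomial.degreeLTEquiv ℂ m).finrank_eq, Module.finrank_fin_fun]
  have hninj : ¬ Function.Injective L := by
    intro h
    have := LinearMap.finrank_le_finrank_of_injective h
    rw [hfr1, hfr2] at this
    omega
  have hker : LinearMap.ker L ≠ ⊥ := by
    intro h
    exact hninj (LinearMap.ker_eq_bot.mp h)
  obtain ⟨x, hxker, hx0⟩ := Submodule.ne_bot_iff _ |>.mp hker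
  refine ⟨x.1, ?_, ?_, ?_⟩
  · intro h
    exact hx0 (Subtype.ext h)
  · exact mem_degreeLT.mp x.2
  · have hTx : T x.1 = 0 := by
      have := congrArg (Subtype.val) (LinearMap.mem_ker.mp hxker)
      exact this
    rw [hT] at hTx
    have hgm_dvd : gm ∣ A * x.1 - B * derivative x.1 :=
      (modByMonic_eq_zero_iff_dvd hmonic).mp hTx
    obtain ⟨t, ht⟩ := hgm_dvd
    exact ⟨C g.leadingCoeff⁻¹ * t, by rw [ht, hgm]; ring⟩

theorem stmt5 (f q : Polynomial ℂ) (hn : 4 ≤ f.natDegree) (hq : q.degree = 2)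
    (hdvd : q ^ 2 ∣ f) :
    ∃ p : Polynomial ℂ, p ≠ 0 ∧ p.degree ≤ (f.natDegree - 2 : ℕ) ∧
      f ∣ (derivative (derivative f) * p - derivative f * derivative p) := by
  obtain ⟨g, hf⟩ := hdvd
  have hq0 : q ≠ 0 := by
    intro h; rw [h] at hq; simp at hq
  have hf0 : f ≠ 0 := by
    intro h; rw [h] at hn; simp at hn
  have hg0 : g ≠ 0 := by
    rintro rfl; rw [mul_zero] at hf; exact hf0 hf
  have hq2 : q.natDegree = 2 := natDegree_eq_of_degree_eq_some hq
  have hnd : f.natDegree = g.natDegree + 4 := by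
    rw [hf, natDegree_mul (pow_ne_zero _ hq0) hg0, natDegree_pow, hq2]
    omega
  -- find w with g ∣ A*w - B*w'
  obtain ⟨w, hw0, hwdeg, hdvdw⟩ := stmt5_aux g
    (2 * derivative (derivative q) * g + 3 * derivative q * derivative g
      + q * derivative (derivative g))
    (2 * derivative q * g + q * derivative g) hg0
  obtain ⟨s, hs⟩ := hdvdw
  refine ⟨q * w, mul_ne_zero hq0 hw0, ?_, ?_⟩
  · -- degree bound
    have hwnat : w.natDegree ≤ g.natDegree := by
      have := hwdeg
      rw [degree_eq_natDegree hw0, Nat.cast_lt] at this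
      omega
    calc (q * w).degree ≤ ((q * w).natDegree : WithBot ℕ) := degree_le_natDegree
      _ ≤ ((f.natDegree - 2 : ℕ) : WithBot ℕ) := by
          rw [natDegree_mul hq0 hw0, hq2]
          exact_mod_cast (by omega : 2 + w.natDegree ≤ f.natDegree - 2)
  · -- divisibility
    have key : derivative (derivative f) * (q * w) - derivative f * derivative (q * w)
        = q ^ 2 * ((2 * derivative (derivative q) * g + 3 * derivative q * derivative g
            + q * derivative (derivative g)) * w
          - (2 * derivative q * g + q * derivative g) * derivative w) := by
      have hf2 : f = q * (q * g) := by rw [hf]; ring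
      rw [hf2]
      simp only [derivative_mul, derivative_add]
      ring
    exact ⟨s, by rw [key, hs, hf]; ring⟩
end

section
/- Let f be a complex polynomial of degree n ≥ 4 with n₁ simple roots, n₂ roots of multiplicity exactly 2, and N₃ roots of multiplicity at least 3 (counted without multiplicity). If n - 2 ≥ 2n₁ + n₂ + 2N₃, then W(f) = { p : deg p ≤ n-2, f ∣ f''p - f'p' } is nonzero; specifically, p₀ = f₁² f₂ f₃² lies in W(f) where f₁, f₂, f₃ are the radical polynomials of the simple, double, and higher-multiplicity root parts of f. -/
open Polynomial

private lemma aux1 (t f v : ℂ[X]) (ht : derivative t = 1) :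
    t ∣ (derivative (derivative f) * (t^2 * v) - derivative f * derivative (t^2 * v)) := by
  have h3 : derivative (t^2 * v) = 2*t*v + t^2 * derivative v := by
    simp [derivative_mul, derivative_pow, ht, map_ofNat]; all_goals ring
  rw [h3]
  exact ⟨derivative (derivative f) * (t*v) - derivative f * (2*v + t*derivative v), by ring⟩

private lemma aux2 (t u v : ℂ[X]) (ht : derivative t = 1) :
    t^2 ∣ (derivative (derivative (t^2 * u)) * (t * v) -
      derivative (t^2 * u) * derivative (t * v)) := by
  have h1 : derivative (t^2 * u) = 2*t*u + t^2 * derivative u := by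
    simp [derivative_mul, derivative_pow, ht, map_ofNat]; all_goals ring
  have h2 : derivative (2*t*u + t^2 * derivative u)
      = 2*u + 4*t*derivative u + t^2 * derivative (derivative u) := by
    simp [derivative_mul, derivative_pow, ht, map_ofNat]; all_goals ring
  have h3 : derivative (t * v) = v + t * derivative v := by
    simp [derivative_mul, ht, map_ofNat]
  rw [h1, h2, h3]
  exact ⟨3 * derivative u * v + t * derivative (derivative u) * v
    - 2 * u * derivative v - t * derivative u * derivative v, by ring⟩

private lemma aux3 (t u v : ℂ[X]) (k : ℕ) (ht : derivative t = 1) :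
    t^(k+3) ∣ (derivative (derivative (t^(k+3) * u)) * (t^2 * v) -
      derivative (t^(k+3) * u) * derivative (t^2 * v)) := by
  have h1 : derivative (t^(k+3) * u)
      = ((k:ℂ[X])+3) * t^(k+2) * u + t^(k+3) * derivative u := by
    simp [derivative_mul, derivative_pow, ht, map_ofNat]; all_goals (push_cast; ring)
  have h2 : derivative (((k:ℂ[X])+3) * t^(k+2) * u + t^(k+3) * derivative u)
      = ((k:ℂ[X])+3)*((k:ℂ[X])+2) * t^(k+1) * u + (2*(k:ℂ[X])+6) * t^(k+2) * derivative u
        + t^(k+3) * derivative (derivative u) := by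
    simp [derivative_mul, derivative_pow, ht, map_ofNat]; all_goals (push_cast; ring)
  have h3 : derivative (t^2 * v) = 2*t*v + t^2 * derivative v := by
    simp [derivative_mul, derivative_pow, ht, map_ofNat]; all_goals ring
  rw [h1, h2, h3]
  exact ⟨((k:ℂ[X])^2 + 3*(k:ℂ[X])) * u * v
    + t * ((2*(k:ℂ[X]) + 4) * derivative u * v - ((k:ℂ[X]) + 3) * u * derivative v)
    + t^2 * (derivative (derivative u) * v - derivative u * derivative v), by ring⟩

theorem stmt6 (f : Polynomial ℂ) (hn : 4 ≤ f.natDegree)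
    (f₁ f₂ f₃ : Polynomial ℂ)
    (hf₁ : f₁ = ∏ α ∈ f.roots.toFinset.filter (fun α => f.rootMultiplicity α = 1), (X - C α))
    (hf₂ : f₂ = ∏ β ∈ f.roots.toFinset.filter (fun β => f.rootMultiplicity β = 2), (X - C β))
    (hf₃ : f₃ = ∏ γ ∈ f.roots.toFinset.filter (fun γ => 3 ≤ f.rootMultiplicity γ), (X - C γ))
    (hdeg : 2 * f₁.natDegree + f₂.natDegree + 2 * f₃.natDegree ≤ f.natDegree - 2) :
    f₁ ^ 2 * f₂ * f₃ ^ 2 ≠ 0 ∧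
      (f₁ ^ 2 * f₂ * f₃ ^ 2).degree ≤ (f.natDegree - 2 : ℕ) ∧
      f ∣ (derivative (derivative f) * (f₁ ^ 2 * f₂ * f₃ ^ 2) -
        derivative f * derivative (f₁ ^ 2 * f₂ * f₃ ^ 2)) := by
  have hf0 : f ≠ 0 := fun h => by simp [h] at hn
  have hm1 : f₁.Monic := by
    rw [hf₁]; exact monic_prod_of_monic _ _ fun _ _ => monic_X_sub_C _
  have hm2 : f₂.Monic := by
    rw [hf₂]; exact monic_prod_of_monic _ _ fun _ _ => monic_X_sub_C _
  have hm3 : f₃.Monic := by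
    rw [hf₃]; exact monic_prod_of_monic _ _ fun _ _ => monic_X_sub_C _
  have hmp : (f₁ ^ 2 * f₂ * f₃ ^ 2).Monic := ((hm1.pow 2).mul hm2).mul (hm3.pow 2)
  refine ⟨hmp.ne_zero, ?_, ?_⟩
  · rw [degree_eq_natDegree hmp.ne_zero, Nat.cast_le]
    calc (f₁ ^ 2 * f₂ * f₃ ^ 2).natDegree
        = 2 * f₁.natDegree + f₂.natDegree + 2 * f₃.natDegree := by
          rw [natDegree_mul (mul_ne_zero (pow_ne_zero _ hm1.ne_zero) hm2.ne_zero)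
              (pow_ne_zero _ hm3.ne_zero),
            natDegree_mul (pow_ne_zero _ hm1.ne_zero) hm2.ne_zero,
            natDegree_pow, natDegree_pow]
      _ ≤ f.natDegree - 2 := hdeg
  · set W := derivative (derivative f) * (f₁ ^ 2 * f₂ * f₃ ^ 2) -
      derivative f * derivative (f₁ ^ 2 * f₂ * f₃ ^ 2) with hWdef
    by_cases hW0 : W = 0
    · exact hW0.symm ▸ dvd_zero f
    refine Splits.dvd_of_roots_le_roots (IsAlgClosed.splits f) hf0 ?_
    rw [Multiset.le_iff_count]
    intro α
    by_cases hα : α ∈ f.roots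
    · rw [count_roots, count_roots, le_rootMultiplicity_iff hW0]
      have hα' : α ∈ f.roots.toFinset := Multiset.mem_toFinset.2 hα
      have ht : derivative (X - C α) = (1 : ℂ[X]) := derivative_X_sub_C α
      have hmpos : 1 ≤ f.rootMultiplicity α :=
        (rootMultiplicity_pos hf0).2 (isRoot_of_mem_roots hα)
      rcases lt_or_ge (f.rootMultiplicity α) 3 with h3 | h3
      · have h12 : f.rootMultiplicity α = 1 ∨ f.rootMultiplicity α = 2 := by omega
        rcases h12 with h | h
        · -- multiplicity 1
          rw [h, pow_one]
          have hd : (X - C α) ∣ f₁ := by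
            rw [hf₁]; exact Finset.dvd_prod_of_mem _ (Finset.mem_filter.2 ⟨hα', h⟩)
          obtain ⟨w, hw⟩ := hd
          have e1 : f₁ ^ 2 * f₂ * f₃ ^ 2 = (X - C α)^2 * (w^2 * f₂ * f₃^2) := by
            rw [hw]; ring
          rw [hWdef, e1]
          exact aux1 _ f _ ht
        · -- multiplicity 2
          rw [h]
          have hd : (X - C α) ∣ f₂ := by
            rw [hf₂]; exact Finset.dvd_prod_of_mem _ (Finset.mem_filter.2 ⟨hα', h⟩)
          obtain ⟨w, hw⟩ := hd
          obtain ⟨g, hg⟩ : (X - C α)^2 ∣ f := h ▸ pow_rootMultiplicity_dvd f α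
          have e1 : f₁ ^ 2 * f₂ * f₃ ^ 2 = (X - C α) * (f₁^2 * w * f₃^2) := by
            rw [hw]; ring
          rw [hWdef, e1, hg]
          exact aux2 _ _ _ ht
      · -- multiplicity ≥ 3
        have hd : (X - C α) ∣ f₃ := by
          rw [hf₃]; exact Finset.dvd_prod_of_mem _ (Finset.mem_filter.2 ⟨hα', h3⟩)
        obtain ⟨w, hw⟩ := hd
        obtain ⟨k, hk⟩ : ∃ k, f.rootMultiplicity α = k + 3 :=
          ⟨f.rootMultiplicity α - 3, (Nat.sub_add_cancel h3).symm⟩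
        obtain ⟨g, hg⟩ : (X - C α)^(k+3) ∣ f := hk ▸ pow_rootMultiplicity_dvd f α
        have e1 : f₁ ^ 2 * f₂ * f₃ ^ 2 = (X - C α)^2 * (f₁^2 * f₂ * w^2) := by
          rw [hw]; ring
        rw [hk, hWdef, e1, hg]
        exact aux3 _ _ _ k ht
    · simp [Multiset.count_eq_zero.2 hα]
end

section
/- Let f(x) = x⁵. Then W(f) = { x²g(x) : g ∈ ℂ[x], deg g ≤ 1 }, so dim W(f) = 2. -/
/-!
For `f = X ^ (m + 2)` one has `f'' p - f' p' = (m + 2) X ^ m ((m + 1) p - X p')`, and the `k`-th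
coefficient of `(m + 1) p - X p'` is `(m + 1 - k) p_k`. So `X ^ (m + 2)` divides `f'' p - f' p'`
exactly when `p_0 = p_1 = 0`, provided `m + 1 ∉ {0, 1}`; for `m = 3` and `deg p ≤ 3` this says
`p = X ^ 2 g` with `deg g ≤ 1`.
-/

open Polynomial

namespace Polynomial

variable {R : Type*}

theorem coeff_C_mul_sub_X_mul_derivative [CommRing R] (a : R) (p : R[X]) (k : ℕ) :
    (C a * p - X * derivative p).coeff k = (a - k) * p.coeff k := by
  rcases k with _ | k
  · simp
  · simp only [coeff_sub, coeff_C_mul, coeff_X_mul, coeff_derivative, Nat.cast_add, Nat.cast_one]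
    ring

theorem X_pow_dvd_C_mul_sub_X_mul_derivative_iff [CommRing R] [IsDomain R] {a : R} {n : ℕ}
    (ha : ∀ k < n, a ≠ k) (p : R[X]) :
    X ^ n ∣ C a * p - X * derivative p ↔ X ^ n ∣ p := by
  simp only [X_pow_dvd_iff, coeff_C_mul_sub_X_mul_derivative]
  refine forall₂_congr fun k hk => ?_
  simp [sub_ne_zero.mpr (ha k hk)]

theorem derivative_derivative_X_pow_mul_sub [CommRing R] (m : ℕ) (p : R[X]) :
    derivative (derivative (X ^ (m + 2))) * p - derivative (X ^ (m + 2)) * derivative p =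
      C ((m : R) + 2) * X ^ m * (C ((m : R) + 1) * p - X * derivative p) := by
  rw [derivative_X_pow, derivative_C_mul, derivative_X_pow, show m + 2 - 1 = m + 1 by omega,
    Nat.add_sub_cancel, pow_succ]
  push_cast
  ring

theorem X_pow_dvd_derivative_derivative_X_pow_mul_sub_iff [Field R] [CharZero R] {m : ℕ}
    (hm : 1 ≤ m) (p : R[X]) :
    X ^ (m + 2) ∣
        derivative (derivative (X ^ (m + 2))) * p - derivative (X ^ (m + 2)) * derivative p ↔
      X ^ 2 ∣ p := by
  have hunit : IsUnit (C ((m : R) + 2)) :=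
    isUnit_C.mpr (Ne.isUnit (by exact_mod_cast (m + 1).succ_ne_zero))
  rw [derivative_derivative_X_pow_mul_sub, mul_assoc, hunit.dvd_mul_left, pow_add,
    mul_dvd_mul_iff_left (pow_ne_zero m X_ne_zero)]
  refine X_pow_dvd_C_mul_sub_X_mul_derivative_iff (fun k hk => ?_) p
  exact_mod_cast (by omega : m + 1 ≠ k)

theorem degree_X_pow_mul_le_iff [CommRing R] [Nontrivial R] {n k : ℕ} (g : R[X]) :
    (X ^ n * g).degree ≤ ((n + k : ℕ) : WithBot ℕ) ↔ g.degree ≤ k := by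
  rw [mul_comm, degree_mul_X_pow, Nat.cast_add, add_comm (n : WithBot ℕ)]
  exact WithBot.add_le_add_iff_right WithBot.coe_ne_bot

theorem degree_le_and_X_pow_dvd_iff [CommRing R] [Nontrivial R] {n k : ℕ} (p : R[X]) :
    (p.degree ≤ ((n + k : ℕ) : WithBot ℕ) ∧ X ^ n ∣ p) ↔
      ∃ g : R[X], g.degree ≤ k ∧ p = X ^ n * g := by
  constructor
  · rintro ⟨hdeg, g, rfl⟩
    exact ⟨g, (degree_X_pow_mul_le_iff g).mp hdeg, rfl⟩
  · rintro ⟨g, hg, rfl⟩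
    exact ⟨(degree_X_pow_mul_le_iff g).mpr hg, dvd_mul_right _ _⟩

end Polynomial

theorem stmt8 (f : Polynomial ℂ) (hf : f = X ^ 5) :
    (∀ p : Polynomial ℂ,
      (p.degree ≤ 3 ∧
          f ∣ (derivative (derivative f) * p - derivative f * derivative p)) ↔
        ∃ g : Polynomial ℂ, g.degree ≤ 1 ∧ p = X ^ 2 * g) := by
  subst hf
  intro p
  rw [X_pow_dvd_derivative_derivative_X_pow_mul_sub_iff (m := 3) (by norm_num)]
  exact degree_le_and_X_pow_dvd_iff (n := 2) (k := 1) p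
end

section
/- Let f(x) = (x²-1)²(x - c) with c ≠ ±1. Then W(f) is one-dimensional, spanned by (x² - 1)(6cx - 5c² - 1). -/
open Polynomial

theorem stmt9 (c : ℂ) (hc : c ^ 2 ≠ 1) (f : Polynomial ℂ)
    (hf : f = (X ^ 2 - 1) ^ 2 * (X - C c)) (p : Polynomial ℂ) :
    (p.degree ≤ 3 ∧
        f ∣ (derivative (derivative f) * p - derivative f * derivative p)) ↔
      ∃ t : ℂ, p = C t * ((X ^ 2 - 1) * (C (6 * c) * X - C (5 * c ^ 2 + 1))) := by
  have hd1 : derivative f = 5 * X ^ 4 - 4 * C c * X ^ 3 - 6 * X ^ 2 + 4 * C c * X + 1 := by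
    subst hf
    simp [derivative_pow, map_ofNat]
    ring
  have hd2 : derivative (derivative f)
      = 20 * X ^ 3 - 12 * C c * X ^ 2 - 12 * X + 4 * C c := by
    rw [hd1]
    simp [map_ofNat]
    ring
  have hc1 : c ≠ 1 := fun h => hc (by rw [h]; ring)
  have hcm1 : c ≠ -1 := fun h => hc (by rw [h]; ring)
  have hcsq : c ^ 2 - 1 ≠ 0 := fun h => hc (by linear_combination h)
  constructor
  · rintro ⟨hdeg, k, hk⟩
    rw [hd2, hd1, hf] at hk
    have h1 := congrArg (eval (1 : ℂ)) hk
    have h2 := congrArg (eval (-1 : ℂ)) hk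
    have h3 := congrArg (eval c) hk
    simp at h1 h2 h3
    -- p as cubic
    have hco : ∀ n, 3 < n → p.coeff n = 0 := fun n hn =>
      coeff_eq_zero_of_degree_lt (lt_of_le_of_lt hdeg (by exact_mod_cast hn))
    have hp : p = C (p.coeff 0) + C (p.coeff 1) * X + C (p.coeff 2) * X ^ 2
        + C (p.coeff 3) * X ^ 3 := by
      ext n
      rcases n with _ | _ | _ | _ | n
      · simp
      · simp
      · simp
      · simp
      · simp [hco (n + 4) (by omega)]
    set a0 := p.coeff 0 with ha0
    set a1 := p.coeff 1 with ha1
    set a2 := p.coeff 2 with ha2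
    set a3 := p.coeff 3 with ha3
    have e1 : eval 1 p = a0 + a1 + a2 + a3 := by rw [hp]; simp
    have e2 : eval (-1) p = a0 - a1 + a2 - a3 := by rw [hp]; simp <;> ring
    have e3 : eval c p = a0 + a1 * c + a2 * c ^ 2 + a3 * c ^ 3 := by rw [hp]; simp <;> ring
    have e4 : eval c (derivative p) = a1 + 2 * a2 * c + 3 * a3 * c ^ 2 := by
      rw [hp]; simp <;> ring
    -- scalar equations
    have E1 : a0 + a1 + a2 + a3 = 0 := by
      have hx : (8 - 8 * c) * (a0 + a1 + a2 + a3) = 0 := by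
        rw [← e1]; linear_combination h1
      rcases mul_eq_zero.1 hx with h | h
      · exact absurd (by linear_combination -h/8) hc1
      · exact h
    have E2 : a0 - a1 + a2 - a3 = 0 := by
      have hx : (-8 - 8 * c) * (a0 - a1 + a2 - a3) = 0 := by
        rw [← e2]; linear_combination h2
      rcases mul_eq_zero.1 hx with h | h
      · exact absurd (by linear_combination -h/8) hcm1
      · exact h
    have E3raw : (8 * c ^ 3 - 8 * c) * (a0 + a1 * c + a2 * c ^ 2 + a3 * c ^ 3)
        - (c ^ 2 - 1) ^ 2 * (a1 + 2 * a2 * c + 3 * a3 * c ^ 2) = 0 := by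
      rw [← e3, ← e4]; linear_combination h3
    have E3 : 6 * c * a2 + (5 * c ^ 2 + 1) * a3 = 0 := by
      have key : (c ^ 2 - 1) ^ 2 * (6 * c * a2 + (5 * c ^ 2 + 1) * a3) = 0 := by
        linear_combination E3raw
          + ((-(8 * c ^ 3 - 8 * c)) / 2 + (-7 * c ^ 4 + 6 * c ^ 2 + 1) / 2) * E1
          + ((-(8 * c ^ 3 - 8 * c)) / 2 - (-7 * c ^ 4 + 6 * c ^ 2 + 1) / 2) * E2
      rcases mul_eq_zero.1 key with h | h
      · exact absurd (pow_eq_zero_iff (by norm_num) |>.1 h) hcsq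
      · exact h
    by_cases hc0 : c = 0
    · subst hc0
      refine ⟨a0, ?_⟩
      apply Polynomial.funext
      intro x
      rw [hp]
      simp
      linear_combination ((x + x ^ 2) / 2) * E1 + ((x ^ 2 - x) / 2) * E2
        + (x ^ 3 - x) * E3
    · refine ⟨a3 / (6 * c), ?_⟩
      apply Polynomial.funext
      intro x
      rw [hp]
      simp
      have h6c : (6 : ℂ) * c ≠ 0 := by
        simp [hc0]
      field_simp
      linear_combination (3 * c + 3 * c * x) * E1 + (3 * c - 3 * c * x) * E2
        + (x ^ 2 - 1) * E3
  · rintro ⟨t, rfl⟩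
    constructor
    · compute_degree
    · refine ⟨C t * (C (30 * c) * X - C (20 * c ^ 2 + 10)), ?_⟩
      have hdp : derivative (C t * ((X ^ 2 - 1) * (C (6 * c) * X - C (5 * c ^ 2 + 1))))
          = C t * (3 * C (6 * c) * X ^ 2 - 2 * C (5 * c ^ 2 + 1) * X - C (6 * c)) := by
        simp [map_ofNat, derivative_pow]
        exact Or.inl (by ring)
      rw [hd2, hd1, hdp, hf]
      simp only [map_ofNat, C_mul, C_add, C_pow, C_1]
      ring
end

section
/- Let f(x) = (x²-1)²(x - 1) = (x-1)³(x+1)². Then W(f) is one-dimensional, spanned by (x²-1)(x-1). -/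
open Polynomial

set_option maxHeartbeats 1000000 in
theorem stmt10 (f : Polynomial ℂ) (hf : f = (X - 1) ^ 3 * (X + 1) ^ 2)
    (p : Polynomial ℂ) :
    (p.degree ≤ 3 ∧
        f ∣ (derivative (derivative f) * p - derivative f * derivative p)) ↔
      ∃ t : ℂ, p = C t * ((X ^ 2 - 1) * (X - 1)) := by
  constructor
  · rintro ⟨hdeg, q, hq⟩
    set a := p.coeff 3 with ha
    set b := p.coeff 2 with hb
    set c := p.coeff 1 with hc
    set d := p.coeff 0 with hd
    have hp : p = C a * X ^ 3 + C b * X ^ 2 + C c * X + C d := by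
      ext n
      rcases n with _ | _ | _ | _ | n
      · simp [hd]
      · simp [hc]
      · simp [hb]
      · simp [ha]
      · rw [coeff_eq_zero_of_degree_lt (lt_of_le_of_lt hdeg
          (by exact_mod_cast by norm_num : (3 : WithBot ℕ) < (n + 4 : ℕ)))]
        simp [coeff_X_pow]
    rw [hf, hp] at hq
    have E2 := congrArg (eval (-1 : ℂ)) hq
    have E3 := congrArg (eval (1 : ℂ)) (congrArg derivative hq)
    have E5 := congrArg (eval (1 : ℂ)) (congrArg derivative (congrArg derivative hq))
    simp only [derivative_mul, derivative_pow, derivative_sub, derivative_add, derivative_X,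
      derivative_one, derivative_C, derivative_X_pow, derivative_zero, derivative_ofNat,
      derivative_natCast] at E2 E3 E5
    simp only [eval_mul, eval_add, eval_sub, eval_pow, eval_X, eval_C, eval_one,
      eval_ofNat, eval_natCast, eval_neg, eval_zero] at E2 E3 E5
    ring_nf at E2 E3 E5
    have h1 : a + b + c + d = 0 := by linear_combination E3 / 24
    have h2 : -a + b - c + d = 0 := by linear_combination -E2 / 16
    have h3 : 3 * a + 2 * b + c = 0 := by linear_combination E5 / 24 - E3 / 6
    refine ⟨a, ?_⟩
    have hbb : b = -a := by linear_combination h3 / 2 - h1 / 4 + h2 / 4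
    have hcc : c = -a := by linear_combination h1 / 2 - h2 / 2
    have hdd : d = a := by linear_combination h1 / 2 + h2 / 2 - hbb
    rw [hp, hbb, hcc, hdd]
    simp only [map_neg]
    ring
  · rintro ⟨t, hp⟩
    constructor
    · rw [hp]; compute_degree
    · refine ⟨C (5 * t) * (X - 1), ?_⟩
      subst hf hp
      simp only [derivative_mul, derivative_pow, derivative_sub, derivative_add, derivative_X,
        derivative_one, derivative_C, derivative_X_pow, derivative_zero, derivative_ofNat,
        derivative_natCast, map_ofNat, C_eq_natCast, C_mul, map_one]
      push_cast
      ring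
end

section
/- Given pairwise distinct ω₁,…,ω_s ∈ ℂ and η₁,…,η_s ∈ ℂ, if k ≥ 2s - 1, then dim { p ∈ ℂ[x] : deg p ≤ k, p'(ω_i) = η_i p(ω_i) ∀i } = k + 1 - s. -/
open Polynomial

open Finset in
lemma exists_interp_aux {s : ℕ} (ω : Fin s → ℂ) (hω : Function.Injective ω)
    (c : Fin s → ℂ) :
    ∃ p : Polynomial ℂ, p.natDegree ≤ 2 * s - 1 ∧ (∀ m, p.eval (ω m) = 0) ∧
      ∀ m, (derivative p).eval (ω m) = c m := by
  classical
  set Q : Fin s → Polynomial ℂ := fun i => ∏ j ∈ univ.erase i, (X - C (ω j))^2 with hQdef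
  set d : Fin s → ℂ := fun i => ∏ j ∈ univ.erase i, (ω i - ω j)^2 with hddef
  have hd : ∀ i, d i ≠ 0 := by
    intro i
    refine Finset.prod_ne_zero_iff.mpr fun j hj => ?_
    have : ω i ≠ ω j := fun h => (Finset.mem_erase.mp hj).1 (hω h).symm
    exact pow_ne_zero _ (sub_ne_zero.mpr this)
  have hQeval : ∀ i x, (Q i).eval x = ∏ j ∈ univ.erase i, (x - ω j)^2 := by
    intro i x; simp [hQdef, eval_prod]
  have hQi : ∀ i, (Q i).eval (ω i) = d i := fun i => hQeval i (ω i)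
  have hQm : ∀ i m, m ≠ i → (Q i).eval (ω m) = 0 := by
    intro i m hmi
    rw [hQeval]
    exact Finset.prod_eq_zero (Finset.mem_erase.mpr ⟨hmi, Finset.mem_univ m⟩) (by simp)
  have hQ' : ∀ i m, m ≠ i → (derivative (Q i)).eval (ω m) = 0 := by
    intro i m hmi
    have hm : m ∈ univ.erase i := Finset.mem_erase.mpr ⟨hmi, Finset.mem_univ m⟩
    have : Q i = (X - C (ω m))^2 * ∏ j ∈ (univ.erase i).erase m, (X - C (ω j))^2 :=
      (Finset.mul_prod_erase _ _ hm).symm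
    rw [this, derivative_mul, eval_add, eval_mul, eval_mul]
    simp [derivative_pow, derivative_X_sub_C]
  refine ⟨∑ i, C (c i / d i) * ((X - C (ω i)) * Q i), ?_, ?_, ?_⟩
  · apply natDegree_sum_le_of_forall_le
    intro i _
    refine (natDegree_C_mul_le _ _).trans ?_
    refine (natDegree_mul_le).trans ?_
    have h1 : (X - C (ω i)).natDegree = 1 := natDegree_X_sub_C _
    have h2 : (Q i).natDegree ≤ 2 * (s - 1) := by
      refine (natDegree_prod_le _ _).trans ?_
      have : ∀ j ∈ univ.erase i, ((X - C (ω j))^2).natDegree = 2 := by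
        intro j _; rw [natDegree_pow, natDegree_X_sub_C]
      rw [Finset.sum_congr rfl this, Finset.sum_const, Finset.card_erase_of_mem (mem_univ i),
        Finset.card_univ, Fintype.card_fin, smul_eq_mul]
      omega
    have hs0 : 0 < s := i.pos
    omega
  · intro m
    rw [eval_finset_sum]
    refine Finset.sum_eq_zero fun i _ => ?_
    by_cases h : i = m
    · subst h; simp
    · simp [hQm i m (Ne.symm h)]
  · intro m
    rw [derivative_sum]
    simp only [derivative_C_mul, derivative_mul, derivative_X_sub_C, one_mul]
    rw [eval_finset_sum]
    rw [Finset.sum_eq_single m]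
    · simp [hQi, eval_mul, div_mul_cancel₀ _ (hd m)]
    · intro i _ hi
      simp [hQm i m (Ne.symm hi), hQ' i m (Ne.symm hi)]
    · simp

/-- The linear map `p ↦ (p'(ωᵢ) - ηᵢ p(ωᵢ))ᵢ`. -/
noncomputable def phiMap {s : ℕ} (η ω : Fin s → ℂ) : Polynomial ℂ →ₗ[ℂ] (Fin s → ℂ) where
  toFun p := fun i => (derivative p).eval (ω i) - η i * p.eval (ω i)
  map_add' := by intro a b; funext i; simp; ring
  map_smul' := by intro m a; funext i; simp; ring

/-- The space `Z(η, ω; s, k)` of polynomials of degree at most `k` with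
`p'(ωᵢ) = ηᵢ p(ωᵢ)` for all `i`. -/
noncomputable def Zspace {s : ℕ} (η ω : Fin s → ℂ) (k : ℕ) :
    Submodule ℂ (Polynomial ℂ) where
  carrier := {p | p.degree ≤ (k : ℕ) ∧
    ∀ i, (derivative p).eval (ω i) = η i * p.eval (ω i)}
  add_mem' := by
    rintro a b ⟨ha1, ha2⟩ ⟨hb1, hb2⟩
    refine ⟨le_trans (degree_add_le a b) (max_le ha1 hb1), fun i => ?_⟩
    simp [ha2 i, hb2 i, mul_add]
  zero_mem' := by simp
  smul_mem' := by
    rintro c a ⟨ha1, ha2⟩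
    refine ⟨le_trans (degree_smul_le c a) ha1, fun i => ?_⟩
    simp [ha2 i]
    ring

theorem stmt13 (s k : ℕ) (hs : 0 < s) (hk : 2 * s - 1 ≤ k)
    (η ω : Fin s → ℂ) (hω : Function.Injective ω) :
    Module.finrank ℂ (Zspace η ω k) = k + 1 - s := by
  classical
  set V : Submodule ℂ (Polynomial ℂ) := Polynomial.degreeLE ℂ (k : ℕ) with hVdef
  have hVLT : V = Polynomial.degreeLT ℂ (k + 1) := (Polynomial.degreeLT_succ_eq_degreeLE).symm
  have hfd : FiniteDimensional ℂ V := by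
    rw [hVLT]
    exact LinearEquiv.finiteDimensional (Polynomial.degreeLTEquiv ℂ (k + 1)).symm
  have hfV : Module.finrank ℂ V = k + 1 := by
    rw [hVLT, (Polynomial.degreeLTEquiv ℂ (k + 1)).finrank_eq]
    simp
  set φ := phiMap η ω with hφ
  set L := φ.comp V.subtype with hL
  have hZ : Zspace η ω k = V ⊓ LinearMap.ker φ := by
    ext p
    simp only [Submodule.mem_inf, LinearMap.mem_ker, hVdef, Polynomial.mem_degreeLE]
    constructor
    · rintro ⟨h1, h2⟩
      exact ⟨h1, funext fun i => by simp [hφ, phiMap, h2 i]⟩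
    · rintro ⟨h1, h2⟩
      refine ⟨h1, fun i => ?_⟩
      have := congrFun h2 i
      simp only [hφ, phiMap, LinearMap.coe_mk, AddHom.coe_mk, Pi.zero_apply] at this
      exact sub_eq_zero.mp this
  have hsur : LinearMap.range L = ⊤ := by
    rw [LinearMap.range_eq_top]
    intro c
    obtain ⟨p, hdeg, hev, hev'⟩ := exists_interp_aux ω hω c
    have hpV : p ∈ V := by
      rw [hVdef, Polynomial.mem_degreeLE]
      exact Polynomial.natDegree_le_iff_degree_le.mp (hdeg.trans hk)
    refine ⟨⟨p, hpV⟩, ?_⟩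
    funext i
    simp [hL, hφ, phiMap, hev i, hev' i]
  have hker : LinearMap.ker L = Submodule.comap V.subtype (Zspace η ω k) := by
    rw [hZ, Submodule.comap_inf, Submodule.comap_subtype_self, top_inf_eq, hL,
      LinearMap.ker_comp]
  have hle : Zspace η ω k ≤ V := by rw [hZ]; exact inf_le_left
  have heq : Module.finrank ℂ (Zspace η ω k) = Module.finrank ℂ (LinearMap.ker L) := by
    rw [hker]
    exact (Submodule.comapSubtypeEquivOfLe hle).finrank_eq.symm
  have hrn := LinearMap.finrank_range_add_finrank_ker L
  rw [hsur, hfV] at hrn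
  have hs' : Module.finrank ℂ (⊤ : Submodule ℂ (Fin s → ℂ)) = s := by simp
  rw [hs'] at hrn
  omega
end

section
/- With η = ω = (1, -1), the space Z = { p ∈ ℂ[x] : deg p ≤ 2, p'(1) = p(1), p'(-1) = -p(-1) } has dimension 2 (so it is degenerate: its dimension exceeds k + 1 - s = 1). -/
/-!
Writing `p = a + b X + c X²`, the condition `p'(1) = p(1)` reads `b + 2c = a + b + c` and the
condition `p'(-1) = -p(-1)` reads `b - 2c = -a + b - c`: both say `c = a`. So the two conditions
coincide, and `Z = span {X, 1 + X²}`.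
-/

open Polynomial

namespace Polynomial

variable {R : Type*} [CommRing R] {p : R[X]}

theorem derivative_eval_one_eq_eval_one_iff (hp : p.degree ≤ 2) :
    (derivative p).eval 1 = p.eval 1 ↔ p.coeff 2 = p.coeff 0 := by
  conv_lhs => rw [eq_quadratic_of_degree_le_two hp]
  simp only [derivative_add, derivative_C_mul_X_pow, derivative_C_mul_X, derivative_C, eval_add,
    eval_mul, eval_C, eval_X, eval_pow, eval_zero, Nat.cast_ofNat]
  constructor <;> intro h <;> linear_combination h

theorem derivative_eval_neg_one_eq_neg_eval_neg_one_iff (hp : p.degree ≤ 2) :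
    (derivative p).eval (-1) = -p.eval (-1) ↔ p.coeff 2 = p.coeff 0 := by
  conv_lhs => rw [eq_quadratic_of_degree_le_two hp]
  simp only [derivative_add, derivative_C_mul_X_pow, derivative_C_mul_X, derivative_C, eval_add,
    eval_mul, eval_C, eval_X, eval_pow, eval_zero, Nat.cast_ofNat]
  constructor <;> intro h <;> linear_combination -h

theorem eq_smul_X_add_smul_one_add_X_sq (hp : p.degree ≤ 2) (h : p.coeff 2 = p.coeff 0) :
    p = p.coeff 1 • X + p.coeff 0 • (1 + X ^ 2) := by
  conv_lhs => rw [eq_quadratic_of_degree_le_two hp, h]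
  simp only [smul_eq_C_mul]
  ring

theorem linearIndependent_X_one_add_X_sq [Nontrivial R] :
    LinearIndependent R ![(X : R[X]), 1 + X ^ 2] := by
  refine LinearIndependent.pair_iff.mpr fun s t hst => ⟨?_, ?_⟩
  · simpa [coeff_one] using congrArg (coeff · 1) hst
  · simpa [coeff_one] using congrArg (coeff · 0) hst

end Polynomial

theorem mem_zspace_iff {p : ℂ[X]} :
    p ∈ Zspace ![1, -1] ![1, -1] 2 ↔ p.degree ≤ 2 ∧ p.coeff 2 = p.coeff 0 := by
  simp only [Zspace, Submodule.mem_mk, AddSubmonoid.mem_mk, AddSubsemigroup.mem_mk,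
    Set.mem_ofPred_eq, Fin.forall_fin_two, Nat.cast_ofNat, Matrix.cons_val_zero,
    Matrix.cons_val_one, one_mul, neg_one_mul]
  refine ⟨fun ⟨hp, h1, _⟩ => ⟨hp, (derivative_eval_one_eq_eval_one_iff hp).mp h1⟩,
    fun ⟨hp, h⟩ => ⟨hp, (derivative_eval_one_eq_eval_one_iff hp).mpr h,
      (derivative_eval_neg_one_eq_neg_eval_neg_one_iff hp).mpr h⟩⟩

theorem zspace_eq_span :
    Zspace ![1, -1] ![1, -1] 2 = Submodule.span ℂ (Set.range ![X, 1 + X ^ 2]) := by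
  apply le_antisymm
  · intro p hp
    obtain ⟨hdeg, hcoeff⟩ := mem_zspace_iff.mp hp
    rw [eq_smul_X_add_smul_one_add_X_sq hdeg hcoeff, Matrix.range_cons_cons_empty]
    exact Submodule.mem_span_pair.mpr ⟨_, _, rfl⟩
  · rw [Submodule.span_le, Set.range_subset_iff]
    intro i
    fin_cases i <;> refine mem_zspace_iff.mpr ⟨?_, by simp [coeff_X, coeff_one]⟩ <;>
      simp only [Fin.zero_eta, Fin.mk_one, Matrix.cons_val_zero, Matrix.cons_val_one] <;>
      compute_degree!

theorem stmt15 :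
    Module.finrank ℂ (Zspace (![1, -1] : Fin 2 → ℂ) (![1, -1] : Fin 2 → ℂ) 2) = 2 := by
  rw [zspace_eq_span, finrank_span_eq_card linearIndependent_X_one_add_X_sq, Fintype.card_fin]
end

section
/- Let s ≥ 2, k ≥ 2s - 2, ω₁,…,ω_s ∈ ℂ pairwise distinct, η₁,…,η_s ∈ ℂ, and let f_ω(x) = ∏_{i=1}^s (x - ω_i). If dim Z(η, ω; s, k) > k + 1 - s, then η_i = f_ω''(ω_i)/f_ω'(ω_i) = Σ_{j≠i} 2/(ω_i - ω_j) for every i. -/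
open Polynomial

open Finset Lagrange

/-!
`Z(η, ω; s, k)` is the kernel of the map `p ↦ (p'(ωᵢ) - ηᵢ p(ωᵢ))ᵢ` on polynomials of degree
at most `k`, so degeneracy means this map is not onto `ℂˢ`: some `c ≠ 0` annihilates its image.
Testing `c` on polynomials with double roots at all nodes but one or two (these have degree at
most `2s - 2 ≤ k`) shows first that every `cᵢ ≠ 0`, and then, with `gᵢ = ∏_{j ≠ i} (X - ωⱼ)`
and the test polynomial `gᵢ²`, that `ηᵢ gᵢ(ωᵢ) = 2 gᵢ'(ωᵢ)`. Both stated formulas are rewritings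
of `2 gᵢ'(ωᵢ) / gᵢ(ωᵢ)`, since `f_ω = (X - ωᵢ) gᵢ`.
-/

theorem Submodule.exists_ne_zero_forall_dotProduct_eq_zero {K n : Type*} [Field K] [Fintype n]
    [DecidableEq n] {W : Submodule K (n → K)} (hW : W ≠ ⊤) :
    ∃ c ≠ 0, ∀ w ∈ W, c ⬝ᵥ w = 0 := by
  obtain ⟨φ, hφ, hφW⟩ := W.exists_dual_map_eq_bot_of_lt_top hW.lt_top inferInstance
  refine ⟨(dotProductEquiv K n).symm φ, by simpa using hφ, fun w hw => ?_⟩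
  have : φ w ∈ W.map φ := mem_map_of_mem hw
  rw [hφW, Submodule.mem_bot] at this
  simpa [← dotProductEquiv_apply_apply] using this

theorem Lagrange.eval_derivative_nodal_div_eval_nodal {F ι : Type*} [Field F] [DecidableEq ι]
    {t : Finset ι} {v : ι → F} {x : F} (hx : ∀ i ∈ t, x ≠ v i) :
    (derivative (nodal t v)).eval x / (nodal t v).eval x = ∑ i ∈ t, 1 / (x - v i) := by
  rw [derivative_nodal, eval_finsetSum, Finset.sum_div]
  refine Finset.sum_congr rfl fun i hi => ?_
  have hxi : x - v i ≠ 0 := sub_ne_zero.mpr (hx i hi)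
  have herase : (nodal (t.erase i) v).eval x ≠ 0 :=
    eval_nodal_not_at_node fun j hj => hx j (mem_of_mem_erase hj)
  rw [nodal_eq_mul_nodal_erase hi, eval_mul, eval_sub, eval_X, eval_C]
  field_simp

section XSubCMul

variable {R : Type*} [CommRing R] (a : R) (q : R[X])

theorem eval_derivative_X_sub_C_mul :
    (derivative ((X - C a) * q)).eval a = q.eval a := by
  simp [derivative_mul]

theorem eval_derivative_derivative_X_sub_C_mul :
    (derivative (derivative ((X - C a) * q))).eval a = 2 * (derivative q).eval a := by
  simp [derivative_mul]
  ring

end XSubCMul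

section Constraint

variable {F : Type*} [Field F] {s : ℕ} (η ω : Fin s → F)

@[simps]
noncomputable def constraintMap : F[X] →ₗ[F] Fin s → F where
  toFun p i := (derivative p).eval (ω i) - η i * p.eval (ω i)
  map_add' p q := by ext i; simp only [derivative_add, eval_add, Pi.add_apply]; ring
  map_smul' c p := by ext i; simp only [derivative_smul, eval_smul, smul_eq_mul, Pi.smul_apply,
    RingHom.id_apply]; ring

variable {η ω}

theorem constraintMap_apply_eq_zero_of_sq_dvd {p : F[X]} {i : Fin s}
    (h : (X - C (ω i)) ^ 2 ∣ p) : constraintMap η ω p i = 0 := by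
  obtain ⟨q, rfl⟩ := h
  simp [derivative_mul, derivative_pow]

theorem dotProduct_constraintMap_eq_sum_of_sq_dvd (c : Fin s → F) {p : F[X]}
    (t : Finset (Fin s)) (h : ∀ i ∉ t, (X - C (ω i)) ^ 2 ∣ p) :
    c ⬝ᵥ constraintMap η ω p = ∑ i ∈ t, c i * constraintMap η ω p i := by
  refine (Finset.sum_subset (subset_univ t) fun i _ hi => ?_).symm
  rw [constraintMap_apply_eq_zero_of_sq_dvd (h i hi), mul_zero]

variable {k : ℕ} {c : Fin s → F}

theorem ne_zero_of_dotProduct_constraintMap_eq_zero (hω : Function.Injective ω)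
    (hk : 2 * s ≤ k + 3) (hc : ∀ p : F[X], p.degree ≤ k → c ⬝ᵥ constraintMap η ω p = 0)
    (hc0 : c ≠ 0) (j : Fin s) : c j ≠ 0 := by
  intro hj
  obtain ⟨j₀, hj₀⟩ := Function.ne_iff.mp hc0
  have hne : j ≠ j₀ := by rintro rfl; exact hj₀ hj
  set u := univ \ {j, j₀}
  set p := (X - C (ω j₀)) * nodal u ω ^ 2
  have hdeg : p.degree ≤ k := by
    have hu : #u = s - 2 := by simp [u, card_univ_sdiff, card_pair hne]
    rw [← natDegree_le_iff_degree_le, natDegree_mul (X_sub_C_ne_zero _)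
      (pow_ne_zero _ nodal_ne_zero), natDegree_pow, natDegree_nodal, natDegree_X_sub_C, hu]
    omega
  have hdvd : ∀ l ∉ ({j, j₀} : Finset (Fin s)), (X - C (ω l)) ^ 2 ∣ p := fun l hl =>
    (pow_dvd_pow_of_dvd (X_sub_C_dvd_nodal ω (by simpa [u] using hl)) 2).mul_left _
  have hnodal : (nodal u ω).eval (ω j₀) ≠ 0 :=
    eval_nodal_not_at_node fun l hl => hω.ne (by rintro rfl; simp [u] at hl)
  have hp := hc p hdeg
  rw [dotProduct_constraintMap_eq_sum_of_sq_dvd c _ hdvd, sum_pair hne, hj, zero_mul, zero_add,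
    constraintMap_apply, eval_derivative_X_sub_C_mul] at hp
  simp only [p, eval_mul, eval_pow, eval_sub, eval_X, eval_C, sub_self, zero_mul, mul_zero,
    sub_zero] at hp
  exact mul_ne_zero hj₀ (pow_ne_zero 2 hnodal) hp

theorem eq_two_mul_eval_derivative_nodal_div_of_dotProduct_constraintMap_eq_zero
    (hω : Function.Injective ω) (hk : 2 * s ≤ k + 2)
    (hc : ∀ p : F[X], p.degree ≤ k → c ⬝ᵥ constraintMap η ω p = 0) {i : Fin s}
    (hci : c i ≠ 0) :
    η i = 2 * (derivative (nodal (univ.erase i) ω)).eval (ω i) /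
      (nodal (univ.erase i) ω).eval (ω i) := by
  set g := nodal (univ.erase i) ω
  have hdeg : (g ^ 2).degree ≤ k := by
    rw [← natDegree_le_iff_degree_le, natDegree_pow, natDegree_nodal,
      card_erase_of_mem (mem_univ i), card_univ, Fintype.card_fin]
    omega
  have hdvd : ∀ l ∉ ({i} : Finset (Fin s)), (X - C (ω l)) ^ 2 ∣ g ^ 2 := fun l hl =>
    pow_dvd_pow_of_dvd (X_sub_C_dvd_nodal ω (by simpa using hl)) 2
  have hg : g.eval (ω i) ≠ 0 :=
    eval_nodal_not_at_node fun l hl => hω.ne (ne_of_mem_erase hl).symm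
  have hp := hc (g ^ 2) hdeg
  rw [dotProduct_constraintMap_eq_sum_of_sq_dvd c _ hdvd, sum_singleton, constraintMap_apply] at hp
  have hfactor : g.eval (ω i) * (2 * (derivative g).eval (ω i) - η i * g.eval (ω i)) = 0 := by
    have hp' := (mul_eq_zero.mp hp).resolve_left hci
    simp only [derivative_pow, eval_mul, eval_pow, eval_C, Nat.cast_ofNat] at hp'
    linear_combination hp'
  rw [eq_div_iff hg]
  linear_combination -(mul_eq_zero.mp hfactor).resolve_left hg

end Constraint

section Zspace

variable {s k : ℕ} {η ω : Fin s → ℂ}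

theorem zspace_eq_degreeLT_inf_ker :
    Zspace η ω k = degreeLT ℂ (k + 1) ⊓ LinearMap.ker (constraintMap η ω) := by
  ext p
  simp [Zspace, degreeLT_succ_eq_degreeLE, mem_degreeLE, funext_iff, sub_eq_zero]

theorem finrank_zspace_add_finrank_map_constraintMap :
    Module.finrank ℂ (Zspace η ω k) +
      Module.finrank ℂ ((degreeLT ℂ (k + 1)).map (constraintMap η ω)) = k + 1 := by
  have h := ((constraintMap η ω).domRestrict (degreeLT ℂ (k + 1))).finrank_range_add_finrank_ker
  rw [LinearMap.range_domRestrict, LinearMap.ker_domRestrict, ← Submodule.finrank_map_subtype_eq,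
    Submodule.map_comap_subtype, ← zspace_eq_degreeLT_inf_ker,
    Module.finrank_eq_card_basis (degreeLT.basis ℂ (k + 1)), Fintype.card_fin] at h
  omega

theorem exists_ne_zero_dotProduct_constraintMap_eq_zero
    (hdeg : k + 1 - s < Module.finrank ℂ (Zspace η ω k)) :
    ∃ c ≠ 0, ∀ p : ℂ[X], p.degree ≤ k → c ⬝ᵥ constraintMap η ω p = 0 := by
  have hrange : (degreeLT ℂ (k + 1)).map (constraintMap η ω) ≠ ⊤ := by
    intro htop
    have h := finrank_zspace_add_finrank_map_constraintMap (η := η) (ω := ω) (k := k)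
    rw [htop, finrank_top, Module.finrank_fin_fun] at h
    omega
  obtain ⟨c, hc0, hc⟩ := Submodule.exists_ne_zero_forall_dotProduct_eq_zero hrange
  refine ⟨c, hc0, fun p hp => hc _ (Submodule.mem_map_of_mem ?_)⟩
  rwa [degreeLT_succ_eq_degreeLE, mem_degreeLE]

end Zspace

theorem stmt17_general (s k : ℕ) (hk : 2 * s - 2 ≤ k)
    (η ω : Fin s → ℂ) (hω : Function.Injective ω)
    (hdeg : k + 1 - s < Module.finrank ℂ (Zspace η ω k)) :
    ∀ i : Fin s,
      η i = (derivative (derivative (∏ j, (X - C (ω j))))).eval (ω i) /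
          (derivative (∏ j, (X - C (ω j)))).eval (ω i) ∧
      η i = ∑ j ∈ Finset.univ.erase i, 2 / (ω i - ω j) := by
  intro i
  obtain ⟨c, hc0, hc⟩ := exists_ne_zero_dotProduct_constraintMap_eq_zero hdeg
  have hη := eq_two_mul_eval_derivative_nodal_div_of_dotProduct_constraintMap_eq_zero hω
    (by omega) hc (ne_zero_of_dotProduct_constraintMap_eq_zero hω (by omega) hc hc0 i)
  have hf : ∏ j, (X - C (ω j)) = (X - C (ω i)) * nodal (univ.erase i) ω :=
    nodal_eq_mul_nodal_erase (mem_univ i)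
  refine ⟨by rw [hf, eval_derivative_derivative_X_sub_C_mul, eval_derivative_X_sub_C_mul, hη], ?_⟩
  have hnode : ∀ j ∈ univ.erase i, ω i ≠ ω j := fun j hj => hω.ne (ne_of_mem_erase hj).symm
  rw [hη, mul_div_assoc, eval_derivative_nodal_div_eval_nodal hnode, mul_sum]
  simp_rw [mul_one_div]

theorem stmt17 (s k : ℕ) (hs : 2 ≤ s) (hk : 2 * s - 2 ≤ k)
    (η ω : Fin s → ℂ) (hω : Function.Injective ω)
    (hdeg : k + 1 - s < Module.finrank ℂ (Zspace η ω k)) :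
    ∀ i : Fin s,
      η i = (derivative (derivative (∏ j, (X - C (ω j))))).eval (ω i) /
          (derivative (∏ j, (X - C (ω j)))).eval (ω i) ∧
      η i = ∑ j ∈ Finset.univ.erase i, 2 / (ω i - ω j) :=
  stmt17_general s k hk η ω hω hdeg
end

section
/- Let s ≥ 1, k ≥ s + 1, ω₁,…,ω_{s+1} ∈ ℂ pairwise distinct, η ∈ ℂ^{s+1}, and fix an index i. Define ω̃ ∈ ℂ^s by deleting ω_i from ω, and η̃_j = η_j - 2/(ω_j - ω_i) for j ≠ i. Then the map p ↦ p/(x - ω_i)² is a linear isomorphism from { p ∈ Z(η, ω; s+1, k) : p(ω_i) = 0 } onto Z(η̃, ω̃; s, k-2); consequently dim Z(η, ω; s+1, k) ≤ dim Z(η̃, ω̃; s, k-2) + 1. -/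
/-!
If `p(ωᵢ) = 0`, the condition `p'(ωᵢ) = ηᵢ p(ωᵢ)` forces `p'(ωᵢ) = 0`, so `p = (X - ωᵢ)² q`.
At another node `b` the logarithmic derivative of `(X - ωᵢ)² q` is `2 / (b - ωᵢ) + q'/q`, so the
conditions on `p` with weights `η` are exactly the conditions on `q` with the shifted weights `η̃`,
and multiplication by `(X - ωᵢ)²` identifies `Z(η̃, ω̃; s, k - 2)` with the kernel of `p ↦ p(ωᵢ)`
on `Z(η, ω; s + 1, k)`, a subspace of codimension at most one.
-/

open Polynomial

namespace Polynomial

theorem Monic.mul_divByMonic_of_dvd {R : Type*} [CommRing R] {q p : R[X]} (hq : q.Monic)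
    (h : q ∣ p) : q * (p /ₘ q) = p := by
  conv_rhs => rw [← modByMonic_add_div p q, (modByMonic_eq_zero_iff_dvd hq).2 h, zero_add]

theorem Monic.invOn_divByMonic_mul {R : Type*} [CommRing R] {q : R[X]} (hq : q.Monic) :
    Set.InvOn (· /ₘ q) (q * ·) Set.univ {p | q ∣ p} :=
  ⟨fun r _ => mul_divByMonic_cancel_left r hq, fun _ h => hq.mul_divByMonic_of_dvd h⟩

theorem sq_dvd_of_isRoot_of_isRoot_derivative {R : Type*} [CommRing R] {p : R[X]} {a : R}
    (h : p.IsRoot a) (h' : (derivative p).IsRoot a) : (X - C a) ^ 2 ∣ p := by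
  obtain ⟨q, rfl⟩ := dvd_iff_isRoot.2 h
  obtain ⟨r, rfl⟩ := dvd_iff_isRoot.2 (by simpa using h' : q.IsRoot a)
  exact ⟨r, by ring⟩

theorem eval_derivative_X_sub_C_sq_mul {R : Type*} [CommRing R] (a b : R) (q : R[X]) :
    (derivative ((X - C a) ^ 2 * q)).eval b =
      (b - a) * (2 * q.eval b + (b - a) * (derivative q).eval b) := by
  simp only [derivative_mul, derivative_X_sub_C_sq, eval_add, eval_mul, eval_pow, eval_sub, eval_X,
    eval_C]
  ring

theorem eval_derivative_X_sub_C_sq_mul_eq_iff {K : Type*} [Field K] {a b : K} (hab : b ≠ a)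
    (c : K) (q : K[X]) :
    (derivative ((X - C a) ^ 2 * q)).eval b = c * ((X - C a) ^ 2 * q).eval b ↔
      (derivative q).eval b = (c - 2 / (b - a)) * q.eval b := by
  have hba : b - a ≠ 0 := sub_ne_zero.2 hab
  rw [eval_derivative_X_sub_C_sq_mul, eval_mul, eval_pow, eval_sub, eval_X, eval_C]
  constructor <;> intro h
  · field_simp
    linear_combination (mul_left_cancel₀ hba (by linear_combination h) :
      2 * q.eval b + (b - a) * (derivative q).eval b = c * ((b - a) * q.eval b))
  · field_simp at h
    linear_combination (b - a) * h

theorem degree_X_sub_C_sq_mul_le_iff {R : Type*} [CommRing R] [Nontrivial R] (a : R) (q : R[X])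
    {k : ℕ} (hk : 2 ≤ k) :
    ((X - C a) ^ 2 * q).degree ≤ (k : WithBot ℕ) ↔ q.degree ≤ (k - 2 : ℕ) := by
  rcases eq_or_ne q 0 with rfl | hq
  · simp
  have hd : ((X - C a) ^ 2 * q).natDegree = 2 + q.natDegree := by
    rw [((monic_X_sub_C a).pow 2).natDegree_mul' hq, (monic_X_sub_C a).natDegree_pow,
      natDegree_X_sub_C, mul_one]
  rw [← natDegree_le_iff_degree_le, ← natDegree_le_iff_degree_le, hd]
  omega

end Polynomial

theorem Submodule.finrank_le_finrank_inf_ker_add_one {K V : Type*} [Field K] [AddCommGroup V]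
    [Module K V] (W : Submodule K V) [FiniteDimensional K W] (f : V →ₗ[K] K) :
    Module.finrank K W ≤ Module.finrank K (W ⊓ LinearMap.ker f : Submodule K V) + 1 := by
  have hrank := LinearMap.finrank_range_add_finrank_ker (f.domRestrict W)
  have hrange : Module.finrank K (LinearMap.range (f.domRestrict W)) ≤ 1 := by
    simpa using Submodule.finrank_le (LinearMap.range (f.domRestrict W))
  have hker : LinearMap.ker (f.domRestrict W) = (W ⊓ LinearMap.ker f).comap W.subtype := by
    simp [LinearMap.ker_domRestrict, Submodule.comap_inf]
  rw [hker, (Submodule.comapSubtypeEquivOfLe inf_le_left).finrank_eq] at hrank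
  omega

theorem mem_Zspace_iff {s : ℕ} {η ω : Fin s → ℂ} {k : ℕ} {p : ℂ[X]} :
    p ∈ Zspace η ω k ↔ p.degree ≤ k ∧ ∀ i, (derivative p).eval (ω i) = η i * p.eval (ω i) :=
  Iff.rfl

instance Zspace.finiteDimensional {s : ℕ} (η ω : Fin s → ℂ) (k : ℕ) :
    FiniteDimensional ℂ (Zspace η ω k) :=
  Submodule.finiteDimensional_of_le (S₂ := degreeLT ℂ (k + 1)) fun _ hp =>
    mem_degreeLT.2 (hp.1.trans_lt (by exact_mod_cast k.lt_succ_self))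

theorem X_sub_C_sq_mul_mem_Zspace_iff {s k : ℕ} (η ω : Fin (s + 1) → ℂ) (i : Fin (s + 1))
    (hω : Function.Injective ω) (hk : 2 ≤ k) (q : ℂ[X]) :
    (X - C (ω i)) ^ 2 * q ∈ Zspace η ω k ↔
      q ∈ Zspace (fun j => η (i.succAbove j) - 2 / (ω (i.succAbove j) - ω i))
        (fun j => ω (i.succAbove j)) (k - 2) := by
  rw [mem_Zspace_iff, mem_Zspace_iff, degree_X_sub_C_sq_mul_le_iff _ _ hk,
    Fin.forall_iff_succAbove i]
  refine and_congr_right fun _ => ?_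
  have hi : (derivative ((X - C (ω i)) ^ 2 * q)).eval (ω i) =
      η i * ((X - C (ω i)) ^ 2 * q).eval (ω i) := by
    rw [eval_derivative_X_sub_C_sq_mul, eval_mul]
    simp
  simp only [hi, true_and]
  exact forall_congr' fun j =>
    eval_derivative_X_sub_C_sq_mul_eq_iff (hω.ne (Fin.succAbove_ne i j)) _ q

theorem stmt18 (s k : ℕ) (hs : 1 ≤ s) (hk : s + 1 ≤ k)
    (η ω : Fin (s + 1) → ℂ) (hω : Function.Injective ω) (i : Fin (s + 1))
    (ηt ωt : Fin s → ℂ) (hωt : ωt = fun j => ω (i.succAbove j))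
    (hηt : ηt = fun j => η (i.succAbove j) - 2 / (ω (i.succAbove j) - ω i)) :
    Set.BijOn (fun p : Polynomial ℂ => p /ₘ ((X - C (ω i)) ^ 2))
        {p | p ∈ Zspace η ω k ∧ p.eval (ω i) = 0}
        (Zspace ηt ωt (k - 2) : Set (Polynomial ℂ)) ∧
      Module.finrank ℂ (Zspace η ω k) ≤ Module.finrank ℂ (Zspace ηt ωt (k - 2)) + 1 := by
  set d := (X - C (ω i)) ^ 2
  have hmem : ∀ q, d * q ∈ Zspace η ω k ∧ (d * q).eval (ω i) = 0 ↔ q ∈ Zspace ηt ωt (k - 2) :=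
    fun q => by
      rw [hωt, hηt, ← X_sub_C_sq_mul_mem_Zspace_iff η ω i hω (by omega)]
      simp [d]
  have hdvd : ∀ p ∈ {p | p ∈ Zspace η ω k ∧ p.eval (ω i) = 0}, d ∣ p := fun p ⟨hp, h0⟩ =>
    sq_dvd_of_isRoot_of_isRoot_derivative h0 (by rw [IsRoot, hp.2 i, h0, mul_zero])
  have hinv : Set.InvOn (· /ₘ d) (d * ·) (Zspace ηt ωt (k - 2))
      {p | p ∈ Zspace η ω k ∧ p.eval (ω i) = 0} :=
    ((monic_X_sub_C (ω i)).pow 2).invOn_divByMonic_mul.mono (Set.subset_univ _) hdvd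
  have hbij : Set.BijOn (d * ·) (Zspace ηt ωt (k - 2) : Set ℂ[X])
      {p | p ∈ Zspace η ω k ∧ p.eval (ω i) = 0} :=
    hinv.bijOn (fun q hq => (hmem q).2 hq) fun p hp =>
      (hmem (p /ₘ d)).1 (by rwa [show d * (p /ₘ d) = p from hinv.2 hp])
  refine ⟨hbij.symm hinv.symm, ?_⟩
  have hker : Zspace η ω k ⊓ LinearMap.ker (leval (ω i)) =
      (Zspace ηt ωt (k - 2)).map (LinearMap.mulLeft ℂ d) :=
    SetLike.coe_injective hbij.image_eq.symm
  calc Module.finrank ℂ (Zspace η ω k)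
      ≤ Module.finrank ℂ (Zspace η ω k ⊓ LinearMap.ker (leval (ω i)) : Submodule ℂ ℂ[X]) + 1 :=
        Submodule.finrank_le_finrank_inf_ker_add_one _ _
    _ ≤ _ := by rw [hker]; exact Nat.add_le_add_right (Submodule.finrank_map_le _ _) 1
end
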